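/- arXiv:1407.6219 — 2 statements merged into one kernel-verified Lean document; each statement's English description precedes it below -/
import Mathlib

section
/- Every dyadic point x = K/2^N in (0,1) (K odd) is a local minimum of the Knopp function F: there exists ε > 0 such that F(y) ≥ F(x) for all y ∈ [0,1] with |y - x| < ε. Conversely, every local minimum of F on (0,1) is attained at a dyadic point. -/
open Real MeasureTheory Filter Topology

noncomputable def phi (x : ℝ) : ℝ := |x - round x|

noncomputable def Knopp (α : ℝ) (x : ℝ) : ℝ :=
  ∑' j : ℕ, (2:ℝ) ^ (-(α * (j:ℝ))) * phi ((2:ℝ) ^ j * x)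
def isDyadic (x : ℝ) : Prop := ∃ K N : ℕ, Odd K ∧ x = (K:ℝ) / 2 ^ N

/-!
With `c = 2 ^ (-α)` we have `F x = S_N x + c ^ N * F (2 ^ N * x)`, where `S_N` is the `N`-th
partial sum, and the tail vanishes at `x = k / 2 ^ N`. Near such a point each head term
`c ^ j φ (2 ^ j y)`, `j < N`, loses at most `(2c) ^ j |y - x|` because `φ` is 1-Lipschitz, and
the term of index `N + j` at `y` is exactly `(2c) ^ (N + j) |y - x|`; as `2c ≥ 1` this pays for
the loss.

Conversely, let `a < x < b` be consecutive dyadics of level `N`. On `[a, b]` every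
`y ↦ φ (2 ^ j y)` with `j < N` is a piece of the tent `φ` on some `[n, n + 1]`, so `S_N` is
concave there and `S_N x ≥ min (F a) (F b)`. If `x` is not dyadic the tail at `x` is positive,
so `F x > min (F a) (F b)` with `a, b` arbitrarily close to `x`.
-/

open Set

lemma phi_nonneg (x : ℝ) : 0 ≤ phi x := abs_nonneg _

lemma phi_intCast (n : ℤ) : phi n = 0 := by simp [phi]

lemma phi_pos {x : ℝ} (hx : ∀ n : ℤ, x ≠ n) : 0 < phi x :=
  abs_pos.2 (sub_ne_zero.2 (hx _))

lemma phi_le_abs_sub_intCast (x : ℝ) (n : ℤ) : phi x ≤ |x - n| := round_le x n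

lemma phi_le_phi_add_abs_sub (x y : ℝ) : phi x ≤ phi y + |x - y| :=
  calc phi x ≤ |x - round y| := phi_le_abs_sub_intCast x (round y)
    _ ≤ |x - y| + |y - round y| := abs_sub_le x y (round y)
    _ = phi y + |x - y| := add_comm _ _

lemma abs_le_abs_sub_intCast {t : ℝ} (ht : |t| ≤ 1 / 2) (m : ℤ) : |t| ≤ |t - m| := by
  rcases eq_or_ne m 0 with rfl | hm
  · simp
  · have : (1 : ℝ) ≤ |(m : ℝ)| := by exact_mod_cast Int.one_le_abs hm
    linarith [abs_sub_abs_le_abs_sub (m : ℝ) t, abs_sub_comm (m : ℝ) t]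

lemma phi_intCast_add (n : ℤ) {t : ℝ} (ht : |t| ≤ 1 / 2) : phi (n + t) = |t| := by
  refine le_antisymm (by simpa using phi_le_abs_sub_intCast (n + t) n) ?_
  show |t| ≤ |(n : ℝ) + t - round ((n : ℝ) + t)|
  convert abs_le_abs_sub_intCast ht (round ((n : ℝ) + t) - n) using 2
  push_cast
  ring

lemma phi_eqOn_Icc (n : ℤ) :
    EqOn (fun y : ℝ => min (y - n) (n + 1 - y)) phi (Icc (n : ℝ) (n + 1)) := by
  intro y ⟨h0, h1⟩
  refine le_antisymm ?_ (le_min ?_ ?_)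
  · rcases le_or_gt (round y) n with hr | hr
    · have : (round y : ℝ) ≤ n := by exact_mod_cast hr
      exact (min_le_left _ _).trans (by unfold phi; linarith [le_abs_self (y - round y)])
    · have : (n : ℝ) + 1 ≤ round y := by exact_mod_cast hr
      exact (min_le_right _ _).trans (by unfold phi; linarith [neg_abs_le (y - round y)])
  · simpa [abs_of_nonneg (sub_nonneg.2 h0)] using phi_le_abs_sub_intCast y n
  · simpa [abs_of_nonpos (sub_nonpos.2 h1), abs_sub_comm] using phi_le_abs_sub_intCast y (n + 1)

lemma concaveOn_phi_Icc (n : ℤ) : ConcaveOn ℝ (Icc (n : ℝ) (n + 1)) phi := by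
  refine ConcaveOn.congr
    (ConcaveOn.inf (f := fun y : ℝ => y - n) (g := fun y : ℝ => n + 1 - y) ?_ ?_)
    (phi_eqOn_Icc n) <;>
    refine ⟨convex_Icc _ _, fun x _ y _ a b _ _ hab => le_of_eq ?_⟩ <;> simp only [smul_eq_mul]
  · linear_combination -(n : ℝ) * hab
  · linear_combination ((n : ℝ) + 1) * hab

noncomputable def knoppPartialSum (c : ℝ) (N : ℕ) (x : ℝ) : ℝ :=
  ∑ j ∈ Finset.range N, c ^ j * phi (2 ^ j * x)

noncomputable def knoppSeries (c x : ℝ) : ℝ := ∑' j : ℕ, c ^ j * phi (2 ^ j * x)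

lemma Knopp_eq_knoppSeries (α : ℝ) : Knopp α = knoppSeries (2 ^ (-α)) := by
  ext x
  refine tsum_congr fun j => ?_
  rw [← Real.rpow_natCast (2 ^ (-α)) j, ← Real.rpow_mul zero_le_two, neg_mul]

lemma knoppSeries_intCast (c : ℝ) (n : ℤ) : knoppSeries c n = 0 := by
  have h (j : ℕ) : phi (2 ^ j * n) = 0 := by exact_mod_cast phi_intCast (2 ^ j * n)
  simp [knoppSeries, h]

section Series

variable {c : ℝ} (hc0 : 0 ≤ c) (hc1 : c < 1)
include hc0 hc1

lemma summable_knoppSeries (x : ℝ) : Summable fun j : ℕ => c ^ j * phi (2 ^ j * x) := by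
  refine .of_nonneg_of_le (fun j => mul_nonneg (pow_nonneg hc0 j) (phi_nonneg _))
    (fun j => mul_le_of_le_one_right (pow_nonneg hc0 j) ((abs_sub_round _).trans (by norm_num)))
    (summable_geometric_of_lt_one hc0 hc1)

lemma knoppPartialSum_le_knoppSeries (N : ℕ) (x : ℝ) : knoppPartialSum c N x ≤ knoppSeries c x :=
  (summable_knoppSeries hc0 hc1 x).sum_le_tsum _
    fun j _ => mul_nonneg (pow_nonneg hc0 j) (phi_nonneg _)

lemma knoppSeries_eq_knoppPartialSum_add (N : ℕ) (x : ℝ) :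
    knoppSeries c x = knoppPartialSum c N x + c ^ N * knoppSeries c (2 ^ N * x) := by
  rw [knoppSeries, ← (summable_knoppSeries hc0 hc1 x).sum_add_tsum_nat_add N, knoppSeries,
    ← tsum_mul_left]
  congr 1
  refine tsum_congr fun j => ?_
  rw [pow_add, pow_add, mul_assoc (2 ^ j)]
  ring

lemma knoppSeries_intCast_div_two_pow (k : ℤ) (N : ℕ) :
    knoppSeries c (k / 2 ^ N) = knoppPartialSum c N (k / 2 ^ N) := by
  rw [knoppSeries_eq_knoppPartialSum_add hc0 hc1 N, mul_div_cancel₀ _ (by positivity),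
    knoppSeries_intCast, mul_zero, add_zero]

end Series

lemma knoppSeries_pos {c x : ℝ} (hc0 : 0 < c) (hc1 : c < 1) (hx : ∀ n : ℤ, x ≠ n) :
    0 < knoppSeries c x :=
  (summable_knoppSeries hc0.le hc1 x).tsum_pos
    (fun j => mul_nonneg (pow_nonneg hc0.le j) (phi_nonneg _)) 0 (by simpa using phi_pos hx)

lemma pow_mul_phi_dyadic_le_add {c : ℝ} (hc : 1 ≤ 2 * c) (k : ℤ) {N j : ℕ} (hj : j < N) {y : ℝ}
    (hy : |y - k / 2 ^ N| < 1 / 2 ^ (2 * N)) :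
    c ^ j * phi (2 ^ j * (k / 2 ^ N)) ≤
      c ^ j * phi (2 ^ j * y) + c ^ (N + j) * phi (2 ^ (N + j) * y) := by
  set h := y - k / 2 ^ N with hh
  have hc0 : 0 ≤ c := by linarith
  have hlip : phi (2 ^ j * (k / 2 ^ N)) ≤ phi (2 ^ j * y) + 2 ^ j * |h| := by
    have := phi_le_phi_add_abs_sub (2 ^ j * (k / 2 ^ N)) (2 ^ j * y)
    rwa [← mul_sub, abs_mul, abs_sub_comm, abs_of_pos (by positivity)] at this
  have hshift : (2 : ℝ) ^ (N + j) * y = ((k * 2 ^ j : ℤ) : ℝ) + 2 ^ (N + j) * h := by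
    rw [hh, pow_add]; push_cast; field_simp; ring
  have hsmall : |(2 : ℝ) ^ (N + j) * h| ≤ 1 / 2 := by
    rw [abs_mul, abs_of_pos (by positivity)]
    calc (2 : ℝ) ^ (N + j) * |h| ≤ 2 ^ (2 * N - 1) * (1 / 2 ^ (2 * N)) :=
          mul_le_mul (pow_le_pow_right₀ one_le_two (by omega)) hy.le (abs_nonneg h) (by positivity)
      _ = 1 / 2 := by
          rw [show 2 * N = 2 * N - 1 + 1 by omega, pow_succ]; field_simp; simp
  have htail : phi (2 ^ (N + j) * y) = 2 ^ (N + j) * |h| := by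
    rw [hshift, phi_intCast_add _ hsmall, abs_mul, abs_of_pos (by positivity)]
  calc c ^ j * phi (2 ^ j * (k / 2 ^ N)) ≤ c ^ j * phi (2 ^ j * y) + (2 * c) ^ j * |h| := by
        rw [mul_pow]; nlinarith [mul_le_mul_of_nonneg_left hlip (pow_nonneg hc0 j)]
    _ ≤ c ^ j * phi (2 ^ j * y) + (2 * c) ^ (N + j) * |h| := by
        gcongr
        omega
    _ = c ^ j * phi (2 ^ j * y) + c ^ (N + j) * phi (2 ^ (N + j) * y) := by
        rw [htail, mul_pow]; ring

lemma isLocalMin_knoppSeries_intCast_div_two_pow {c : ℝ} (hc : 1 / 2 ≤ c) (hc1 : c < 1)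
    (k : ℤ) (N : ℕ) : IsLocalMin (knoppSeries c) (k / 2 ^ N) := by
  have hc0 : 0 ≤ c := by linarith
  filter_upwards [Metric.ball_mem_nhds _ (by positivity : (0 : ℝ) < 1 / 2 ^ (2 * N))] with y hy
  rw [Metric.mem_ball, Real.dist_eq] at hy
  calc knoppSeries c (k / 2 ^ N) = knoppPartialSum c N (k / 2 ^ N) :=
        knoppSeries_intCast_div_two_pow hc0 hc1 k N
    _ ≤ ∑ j ∈ Finset.range N, (c ^ j * phi (2 ^ j * y) + c ^ (N + j) * phi (2 ^ (N + j) * y)) :=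
        Finset.sum_le_sum fun j hj =>
          pow_mul_phi_dyadic_le_add (by linarith) k (Finset.mem_range.1 hj) hy
    _ = knoppPartialSum c (N + N) y := by
        rw [knoppPartialSum, Finset.sum_range_add, Finset.sum_add_distrib]
    _ ≤ knoppSeries c y := knoppPartialSum_le_knoppSeries hc0 hc1 _ y

lemma Icc_intCast_div_two_pow_subset_Icc_floor (k : ℤ) (d : ℕ) :
    Icc ((k : ℝ) / 2 ^ d) ((k + 1) / 2 ^ d) ⊆
      Icc (⌊(k : ℝ) / 2 ^ d⌋ : ℝ) (⌊(k : ℝ) / 2 ^ d⌋ + 1) := by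
  refine Icc_subset_Icc (Int.floor_le _) ?_
  have hlt : (k : ℝ) < (⌊(k : ℝ) / 2 ^ d⌋ + 1) * 2 ^ d :=
    (div_lt_iff₀ (by positivity)).1 (Int.lt_floor_add_one _)
  have hle : k + 1 ≤ (⌊(k : ℝ) / 2 ^ d⌋ + 1) * 2 ^ d := by exact_mod_cast hlt
  rw [div_le_iff₀ (by positivity)]
  exact_mod_cast hle

lemma concaveOn_knoppPartialSum {c : ℝ} (hc0 : 0 ≤ c) (k : ℤ) (N : ℕ) :
    ConcaveOn ℝ (Icc ((k : ℝ) / 2 ^ N) ((k + 1) / 2 ^ N)) (knoppPartialSum c N) := by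
  have hsum : knoppPartialSum c N = ∑ j ∈ Finset.range N, fun y => c ^ j * phi (2 ^ j * y) := by
    ext y; simp [knoppPartialSum]
  rw [hsum]
  refine Finset.sum_induction _ (ConcaveOn ℝ _) (fun _ _ => ConcaveOn.add)
    (concaveOn_const 0 (convex_Icc _ _)) fun j hj => ?_
  obtain ⟨d, rfl⟩ := Nat.exists_eq_add_of_le (Finset.mem_range.1 hj).le
  have hmaps : Icc ((k : ℝ) / 2 ^ (j + d)) ((k + 1) / 2 ^ (j + d)) ⊆
      (LinearMap.mul ℝ ℝ (2 ^ j)) ⁻¹' Icc (⌊(k : ℝ) / 2 ^ d⌋ : ℝ) (⌊(k : ℝ) / 2 ^ d⌋ + 1) := by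
    intro y ⟨hy0, hy1⟩
    apply Icc_intCast_div_two_pow_subset_Icc_floor
    simp only [LinearMap.mul_apply', mem_Icc]
    constructor
    · calc (k : ℝ) / 2 ^ d = 2 ^ j * (k / 2 ^ (j + d)) := by rw [pow_add]; field_simp
        _ ≤ 2 ^ j * y := by gcongr
    · calc (2 : ℝ) ^ j * y ≤ 2 ^ j * ((k + 1) / 2 ^ (j + d)) := by gcongr
        _ = (k + 1) / 2 ^ d := by rw [pow_add]; field_simp
  exact (((concaveOn_phi_Icc _).comp_linearMap _).subset hmaps (convex_Icc _ _)).smul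
    (pow_nonneg hc0 j)

lemma floor_div_two_pow_le_lt (x : ℝ) (N : ℕ) :
    (⌊2 ^ N * x⌋ : ℝ) / 2 ^ N ≤ x ∧ x < (⌊2 ^ N * x⌋ + 1) / 2 ^ N := by
  constructor
  · rw [div_le_iff₀ (by positivity), mul_comm]; exact Int.floor_le _
  · rw [lt_div_iff₀ (by positivity), mul_comm]; exact Int.lt_floor_add_one _

lemma min_knoppSeries_floor_lt {c x : ℝ} (hc0 : 0 < c) (hc1 : c < 1) (N : ℕ)
    (hx : ∀ n : ℤ, 2 ^ N * x ≠ n) :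
    min (knoppSeries c (⌊2 ^ N * x⌋ / 2 ^ N)) (knoppSeries c ((⌊2 ^ N * x⌋ + 1) / 2 ^ N)) <
      knoppSeries c x := by
  set k := ⌊2 ^ N * x⌋
  have hx_mem : x ∈ Icc ((k : ℝ) / 2 ^ N) ((k + 1) / 2 ^ N) :=
    ⟨(floor_div_two_pow_le_lt x N).1, (floor_div_two_pow_le_lt x N).2.le⟩
  have hb : knoppSeries c ((k + 1) / 2 ^ N) = knoppPartialSum c N ((k + 1) / 2 ^ N) := by
    exact_mod_cast knoppSeries_intCast_div_two_pow hc0.le hc1 (k + 1) N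
  rw [knoppSeries_intCast_div_two_pow hc0.le hc1, hb,
    knoppSeries_eq_knoppPartialSum_add hc0.le hc1 N x]
  calc min (knoppPartialSum c N (k / 2 ^ N)) (knoppPartialSum c N ((k + 1) / 2 ^ N))
      ≤ knoppPartialSum c N x :=
        (concaveOn_knoppPartialSum hc0.le k N).min_le_of_mem_Icc
          (left_mem_Icc.2 (hx_mem.1.trans hx_mem.2)) (right_mem_Icc.2 (hx_mem.1.trans hx_mem.2))
          hx_mem
    _ < knoppPartialSum c N x + c ^ N * knoppSeries c (2 ^ N * x) :=
        lt_add_of_pos_right _ (mul_pos (pow_pos hc0 N) (knoppSeries_pos hc0 hc1 hx))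

lemma isDyadic_of_two_pow_mul_eq_intCast {x : ℝ} (hx : x ∈ Ioo 0 1) {N : ℕ} {m : ℤ}
    (h : 2 ^ N * x = m) : isDyadic x := by
  have hpos : (0 : ℝ) < 2 ^ N * x := mul_pos (by positivity) hx.1
  lift m to ℕ using by exact_mod_cast h ▸ hpos.le
  have hm0 : m ≠ 0 := by exact_mod_cast (h ▸ hpos.ne' : ((m : ℤ) : ℝ) ≠ 0)
  obtain ⟨e, K, hK, rfl⟩ := Nat.exists_eq_two_pow_mul_odd hm0
  have hlt : 2 ^ e * K < 2 ^ N := by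
    have : (2 : ℝ) ^ N * x < 2 ^ N := mul_lt_of_lt_one_right (by positivity) hx.2
    exact_mod_cast h ▸ this
  have he : e ≤ N := by
    have := (Nat.le_mul_of_pos_right _ hK.pos).trans_lt hlt
    exact ((Nat.pow_lt_pow_iff_right (by norm_num)).1 this).le
  obtain ⟨d, rfl⟩ := Nat.exists_eq_add_of_le he
  refine ⟨K, d, hK, (eq_div_iff (by positivity)).2 ?_⟩
  refine mul_left_cancel₀ (pow_ne_zero e two_ne_zero) ?_
  push_cast [pow_add] at h
  linear_combination h

lemma floor_add_one_div_two_pow_le_one {x : ℝ} (hx : x < 1) (N : ℕ) :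
    (⌊2 ^ N * x⌋ + 1 : ℝ) / 2 ^ N ≤ 1 := by
  have hlt : ⌊2 ^ N * x⌋ < (2 ^ N : ℤ) := by
    rw [Int.floor_lt]; push_cast; exact mul_lt_of_lt_one_right (by positivity) hx
  rw [div_le_one (by positivity)]
  exact_mod_cast Int.add_one_le_of_lt hlt

theorem knopp_local_minima (α : ℝ) (hα : 0 < α) (hα1 : α < 1) :
    (∀ x ∈ Set.Ioo (0:ℝ) 1, isDyadic x →
      ∃ ε > 0, ∀ y ∈ Set.Icc (0:ℝ) 1, |y - x| < ε → Knopp α x ≤ Knopp α y) ∧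
    (∀ x ∈ Set.Ioo (0:ℝ) 1,
      (∃ ε > 0, ∀ y ∈ Set.Icc (0:ℝ) 1, |y - x| < ε → Knopp α x ≤ Knopp α y) →
      isDyadic x) := by
  rw [Knopp_eq_knoppSeries]
  have hc1 : (2 : ℝ) ^ (-α) < 1 := rpow_lt_one_of_one_lt_of_neg one_lt_two (neg_neg_of_pos hα)
  refine ⟨fun x _ ⟨K, N, _, hx⟩ => ?_, fun x hx ⟨ε, hε, hmin⟩ => ?_⟩
  · have hc : 1 / 2 ≤ (2 : ℝ) ^ (-α) := by
      simpa [rpow_neg_one] using rpow_le_rpow_of_exponent_le one_le_two (by linarith : -1 ≤ -α)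
    obtain ⟨ε, hε, hmin⟩ := Metric.eventually_nhds_iff.1
      (isLocalMin_knoppSeries_intCast_div_two_pow hc hc1 K N)
    refine ⟨ε, hε, fun y _ hy => ?_⟩
    simpa [hx] using hmin (y := y) (by simpa [Real.dist_eq, hx] using hy)
  · by_contra hnd
    obtain ⟨N, hN⟩ := exists_pow_lt_of_lt_one hε one_half_lt_one
    rw [div_pow, one_pow] at hN
    have hx' (n : ℤ) : 2 ^ N * x ≠ n := fun h => hnd (isDyadic_of_two_pow_mul_eq_intCast hx h)
    obtain ⟨hax, hxb⟩ := floor_div_two_pow_le_lt x N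
    have ha0 : (0 : ℝ) ≤ ⌊2 ^ N * x⌋ / 2 ^ N := by
      have : 0 ≤ ⌊2 ^ N * x⌋ := Int.floor_nonneg.2 (mul_pos (by positivity) hx.1).le
      positivity
    have hb1 := floor_add_one_div_two_pow_le_one hx.2 N
    have hwidth : ((⌊2 ^ N * x⌋ + 1 : ℝ) / 2 ^ N) - ⌊2 ^ N * x⌋ / 2 ^ N = 1 / 2 ^ N := by ring
    refine (min_knoppSeries_floor_lt (by positivity) hc1 N hx').not_ge (le_min ?_ ?_) <;>
      refine hmin _ ⟨by linarith, by linarith⟩ (abs_sub_lt_iff.2 ⟨by linarith, by linarith⟩)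
end

section
/- Under the hypotheses of the previous lemma with the sequence satisfying f(x_n) = f(x_0) - c·r_n^α, one has the quantitative lower bound: there exists C' > 0 and n_1 such that meas(B(X_0, r_n) ∩ Ω^c) ≥ C'·r_n² for all n ≥ n_1. -/
/-!
Near `x n` the Hölder bound keeps `f` below `f x₀ - (c / 2) r_n ^ α` on an interval of length
`≍ ε r_n`, for a fixed small `ε`. Shifting that interval slightly towards `x₀` places it inside the
ball, and since `α < 1` the drop `(c / 2) r_n ^ α` eventually exceeds `ε r_n`, so the square of
side `≍ ε r_n` just below the height `f x₀` lies in the ball and above the graph.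
-/

open Real MeasureTheory Filter Topology

lemma holder_const_nonneg {f : ℝ → ℝ} {C α : ℝ}
    (hf : ∀ x y : ℝ, |f x - f y| ≤ C * |x - y| ^ α) : 0 ≤ C := by
  simpa using (abs_nonneg _).trans (hf 1 0)

lemma le_add_mul_rpow_of_abs_sub_le {f : ℝ → ℝ} {C α : ℝ} (hα : 0 ≤ α)
    (hf : ∀ x y : ℝ, |f x - f y| ≤ C * |x - y| ^ α) {p q δ : ℝ} (hpq : |p - q| ≤ δ) :
    f p ≤ f q + C * δ ^ α := by
  have : C * |p - q| ^ α ≤ C * δ ^ α :=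
    mul_le_mul_of_nonneg_left (rpow_le_rpow (abs_nonneg _) hpq hα) (holder_const_nonneg hf)
  linarith [le_abs_self (f p - f q), hf p q]

lemma eventually_mul_le_mul_rpow {ι : Type*} {l : Filter ι} {r : ι → ℝ} (hr0 : ∀ i, 0 < r i)
    (hr : Tendsto r l (𝓝 0)) {α : ℝ} (hα1 : α < 1) (ε : ℝ) {c : ℝ} (hc : 0 < c) :
    ∀ᶠ i in l, ε * r i ≤ c * r i ^ α := by
  have hlim : Tendsto (fun i => ε * r i ^ (1 - α)) l (𝓝 0) := by
    simpa [zero_rpow (sub_ne_zero.2 hα1.ne')] using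
      (hr.rpow_const (Or.inr (sub_nonneg.2 hα1.le))).const_mul ε
  filter_upwards [hlim.eventually_le_const hc] with i hi
  calc ε * r i = ε * r i ^ (1 - α) * r i ^ α := by
        rw [mul_assoc, ← rpow_add (hr0 i), sub_add_cancel, rpow_one]
    _ ≤ c * r i ^ α := mul_le_mul_of_nonneg_right hi (rpow_nonneg (hr0 i).le _)

lemma ofReal_mul_le_volume_ball_inter_compl_subgraph {f : ℝ → ℝ} {x₀ y₀ R a b h : ℝ}
    (ha : x₀ - R ≤ a) (hb : b ≤ x₀ + R) (hh0 : 0 ≤ h) (hhR : h ≤ R)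
    (hfab : ∀ p ∈ Set.Ioo a b, f p ≤ y₀ - h) :
    ENNReal.ofReal ((b - a) * h) ≤
      volume (Metric.ball (x₀, y₀) R ∩ {p : ℝ × ℝ | p.2 ≤ f p.1}ᶜ) := by
  have hsub : Set.Ioo a b ×ˢ Set.Ioo (y₀ - h) y₀ ⊆
      Metric.ball (x₀, y₀) R ∩ {p : ℝ × ℝ | p.2 ≤ f p.1}ᶜ := by
    rintro ⟨p, q⟩ ⟨hp, hq⟩
    rw [Set.mem_Ioo] at hp hq
    refine ⟨?_, fun hpq => ?_⟩
    · rw [← ball_prod_same]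
      exact ⟨by rw [Real.ball_eq_Ioo]; constructor <;> linarith,
        by rw [Real.ball_eq_Ioo]; constructor <;> linarith⟩
    · linarith [hfab p hp, show q ≤ f p from hpq]
  calc ENNReal.ofReal ((b - a) * h)
      = volume (Set.Ioo a b ×ˢ Set.Ioo (y₀ - h) y₀) := by
        rw [Measure.volume_eq_prod, Measure.prod_prod, Real.volume_Ioo, Real.volume_Ioo,
          sub_sub_cancel, ENNReal.ofReal_mul' hh0]
    _ ≤ _ := measure_mono hsub

lemma ofReal_le_volume_ball_inter_compl_subgraph_of_holder {f : ℝ → ℝ} {C α : ℝ} (hα : 0 ≤ α)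
    (hf : ∀ x y : ℝ, |f x - f y| ≤ C * |x - y| ^ α) {x₀ x₁ y₀ R ε c : ℝ} (hR : 0 < R)
    (hε : 0 < ε) (hε2 : ε ≤ 1 / 2) (hx₁ : |x₁ - x₀| < R) (hfx₁ : f x₁ ≤ y₀ - c * R ^ α)
    (hεC : C * (2 * ε) ^ α ≤ c / 2) (hεR : ε * R ≤ c * R ^ α) :
    ENNReal.ofReal (ε ^ 2 / 2 * R ^ 2) ≤
      volume (Metric.ball (x₀, y₀) R ∩ {p : ℝ × ℝ | p.2 ≤ f p.1}ᶜ) := by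
  set u := x₁ + ε * (x₀ - x₁)
  have hu : |u - x₀| ≤ (1 - ε) * R := by
    rw [show u - x₀ = (1 - ε) * (x₁ - x₀) by ring, abs_mul, abs_of_pos (by linarith)]
    exact mul_le_mul_of_nonneg_left hx₁.le (by linarith)
  have hux₁ : |u - x₁| ≤ ε * R := by
    rw [show u - x₁ = ε * (x₀ - x₁) by ring, abs_mul, abs_of_pos hε, abs_sub_comm]
    exact mul_le_mul_of_nonneg_left hx₁.le hε.le
  have hbelow : ∀ p ∈ Set.Ioo (u - ε * R / 2) (u + ε * R / 2), f p ≤ y₀ - ε * R / 2 := by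
    intro p hp
    have hpx₁ : |p - x₁| ≤ 2 * ε * R := by
      have hpu : |p - u| ≤ ε * R / 2 := abs_le.2 ⟨by linarith [hp.1], by linarith [hp.2]⟩
      linarith [abs_sub_le p u x₁, mul_pos hε hR]
    calc f p ≤ f x₁ + C * (2 * ε * R) ^ α := le_add_mul_rpow_of_abs_sub_le hα hf hpx₁
      _ = f x₁ + C * (2 * ε) ^ α * R ^ α := by
        rw [mul_rpow (by positivity) hR.le, mul_assoc]
      _ ≤ y₀ - c * R ^ α + c / 2 * R ^ α := add_le_add hfx₁ (by gcongr)
      _ ≤ y₀ - ε * R / 2 := by linarith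
  obtain ⟨hul, hur⟩ := abs_le.1 hu
  refine Eq.trans_le ?_ (ofReal_mul_le_volume_ball_inter_compl_subgraph ?_ ?_ ?_ ?_ hbelow)
  · ring_nf
  · linarith [mul_pos hε hR]
  · linarith [mul_pos hε hR]
  · positivity
  · nlinarith

theorem measure_lower_bound_of_seq (α : ℝ) (hα : 0 < α) (hα1 : α < 1)
    (f : ℝ → ℝ) (C : ℝ) (hf : ∀ x y : ℝ, |f x - f y| ≤ C * |x - y| ^ α)
    (x₀ c : ℝ) (hc : 0 < c) (r : ℕ → ℝ) (hrpos : ∀ n, 0 < r n)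
    (hrlim : Tendsto r atTop (𝓝 0))
    (x : ℕ → ℝ) (hx : ∀ n, x n ∈ Set.Ioo (x₀ - r n) (x₀ + r n))
    (n₀ : ℕ) (hfx : ∀ n, n₀ ≤ n → f (x n) = f x₀ - c * r n ^ α) :
    ∃ C' > 0, ∃ n₁ : ℕ, ∀ n, n₁ ≤ n →
      ENNReal.ofReal (C' * r n ^ 2) ≤
        volume (Metric.ball (x₀, f x₀) (r n) ∩ {p : ℝ × ℝ | p.2 ≤ f p.1}ᶜ) := by
  have hholder : Tendsto (fun ε : ℝ => C * (2 * ε) ^ α) (𝓝 0) (𝓝 0) := by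
    simpa [zero_rpow hα.ne'] using
      (((tendsto_id.const_mul 2).rpow_const (Or.inr hα.le)).const_mul C :
        Tendsto (fun ε : ℝ => C * (2 * ε) ^ α) (𝓝 0) _)
  obtain ⟨ε, hεC, hε, hε2⟩ :=
    (((hholder.eventually_le_const (half_pos hc)).filter_mono nhdsWithin_le_nhds).and
      (Ioc_mem_nhdsGT (by norm_num : (0 : ℝ) < 1 / 2))).exists
  obtain ⟨n₁, hn₁⟩ := eventually_atTop.1 (eventually_mul_le_mul_rpow hrpos hrlim hα1 ε hc)
  refine ⟨ε ^ 2 / 2, by positivity, max n₀ n₁, fun n hn => ?_⟩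
  exact ofReal_le_volume_ball_inter_compl_subgraph_of_holder hα.le hf (hrpos n) hε hε2
    (abs_sub_lt_iff.2 ⟨by linarith [(hx n).2], by linarith [(hx n).1]⟩)
    (hfx n (le_of_max_le_left hn)).le hεC (hn₁ n (le_of_max_le_right hn))
end
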